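/- Let B be the open ball in ℝ^N centered at 0 (of any radius) and let (β,w) be a classical eigenvector of the Reissner–Mindlin system on B with eigenvalue γ. Let A be an orthogonal linear transformation of ℝ^N with matrix M. Then the pair ((β∘A)·M, w∘A), i.e. x ↦ (β(Ax))·M together with x ↦ w(Ax) (β a row vector), is also a classical eigenvector of the Reissner–Mindlin system on B with the same eigenvalue γ. -/

import Mathlib

open MeasureTheory Set Filter
noncomputable section
open scoped Classical

abbrev EV (N : ℕ) := EuclideanSpace ℝ (Fin N)

def ebasis (N : ℕ) (i : Fin N) : EV N := EuclideanSpace.single i 1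

/-- partial derivative of a scalar function in the `i`-th coordinate direction -/
def pder {N : ℕ} (i : Fin N) (f : EV N → ℝ) : EV N → ℝ :=
  fun x => fderiv ℝ f x (ebasis N i)

/-- `(i,j)` entry of the Jacobian matrix of `β` at `x` -/
def jacEntry {N : ℕ} (β : EV N → EV N) (x : EV N) (i j : Fin N) : ℝ :=
  fderiv ℝ β x (ebasis N j) i

/-- squared Frobenius norm of the Jacobian matrix of `β` at `x` -/
def frobSq {N : ℕ} (β : EV N → EV N) (x : EV N) : ℝ :=
  ∑ i, ∑ j, (jacEntry β x i j)^2

/-- divergence of `β` at `x` -/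
def divg {N : ℕ} (β : EV N → EV N) (x : EV N) : ℝ :=
  ∑ i, jacEntry β x i i

/-- the `l`-th component function of a vector field -/
def compF {N : ℕ} (β : EV N → EV N) (l : Fin N) : EV N → ℝ := fun x => β x l

/-- the Laplacian of a scalar function -/
def lapl {N : ℕ} (f : EV N → ℝ) (x : EV N) : ℝ := ∑ i, pder i (pder i f) x

/-- `(β, w)` is a classical eigenvector of the Reissner–Mindlin system on the
ball of radius `R` centered at `0`, with eigenvalue `γ`. -/
structure IsRMEigenOn {N : ℕ} (R t lam mu kk γ : ℝ)
    (β : EV N → EV N) (w : EV N → ℝ) : Prop where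
  regβ : ContDiffOn ℝ 2 β (Metric.closedBall (0 : EV N) R)
  regw : ContDiffOn ℝ 2 w (Metric.closedBall (0 : EV N) R)
  eq1 : ∀ x ∈ Metric.ball (0 : EV N) R, ∀ l : Fin N,
    -(mu/12) * lapl (compF β l) x - ((mu+lam)/12) * pder l (divg β) x
      - (mu*kk/t^2) * (pder l w x - β x l) = (γ * t^2/12) * β x l
  eq2 : ∀ x ∈ Metric.ball (0 : EV N) R,
    -(mu*kk/t^2) * (lapl w x - divg β x) = γ * w x
  bdβ : ∀ x ∈ Metric.sphere (0 : EV N) R, β x = 0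
  bdw : ∀ x ∈ Metric.sphere (0 : EV N) R, w x = 0

/-- the linear map with matrix `M`, acting on `ℝ^N` -/
def mvec {N : ℕ} (M : Matrix (Fin N) (Fin N) ℝ) (x : EV N) : EV N :=
  WithLp.toLp 2 (fun i => ∑ j, M i j * x j)

/-- the rotated vector field `x ↦ β(Ax)·M` (`β` a row vector, `A` with matrix `M`) -/
def rotVec {N : ℕ} (M : Matrix (Fin N) (Fin N) ℝ) (β : EV N → EV N) :
    EV N → EV N :=
  fun x => WithLp.toLp 2 (fun i => ∑ j, β (mvec M x) j * M j i)

/-- the rotated scalar field `x ↦ w(Ax)` -/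
def rotScal {N : ℕ} (M : Matrix (Fin N) (Fin N) ℝ) (w : EV N → ℝ) : EV N → ℝ :=
  fun x => w (mvec M x)

/-- directional derivative of a vector field along the radial direction `n(x) = x/|x|` -/
def nderV {N : ℕ} (β : EV N → EV N) (x : EV N) : EV N :=
  fderiv ℝ β x (‖x‖⁻¹ • x)

/-- directional derivative of a scalar function along the radial direction `n(x) = x/|x|` -/
def nderS {N : ℕ} (w : EV N → ℝ) (x : EV N) : ℝ :=
  fderiv ℝ w x (‖x‖⁻¹ • x)

/-!
Let `A` be the orthogonal map `x ↦ M x`, so that the rotated pair is `(Aᵀ ∘ β ∘ A, w ∘ A)`.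
By the chain rule the Jacobian of `Aᵀ ∘ β ∘ A` at `x` is `Aᵀ · Dβ(Ax) · A`, with the trace of
`Dβ(Ax)`, and the Hessian of `f ∘ A` is `Aᵀ · D²f(Ax) · A`, with the trace of `D²f(Ax)`. So
divergence and Laplacian commute with the rotation; the `l`-th first equation of the rotated pair
at `x` is `∑ⱼ M j l` times the `j`-th first equation of `(β, w)` at `Ax`, and the second equation
transforms as a scalar. As `A` preserves norms, it maps the ball and its boundary onto themselves.
-/

open Matrix Topology

theorem Matrix.sum_mul_sum_mul_eq_trace {n R : Type*} [Fintype n] [DecidableEq n] [CommSemiring R]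
    {M : Matrix n n R} (hM : M * Mᵀ = 1) (a : Matrix n n R) :
    ∑ i, ∑ p, M p i * ∑ q, M q i * a p q = a.trace := by
  have hcycle : (Mᵀ * a * M).trace = a.trace := by
    rw [trace_mul_cycle, hM, one_mul]
  rw [← hcycle]
  simp only [trace, diag, mul_apply, transpose_apply, Finset.mul_sum, Finset.sum_mul]
  refine Finset.sum_congr rfl fun i _ => ?_
  rw [Finset.sum_comm]
  exact Finset.sum_congr rfl fun _ _ => Finset.sum_congr rfl fun _ _ => by ring

section

variable {N : ℕ} {M : Matrix (Fin N) (Fin N) ℝ}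

theorem mvec_eq_toEuclideanCLM (M : Matrix (Fin N) (Fin N) ℝ) :
    mvec M = toEuclideanCLM (𝕜 := ℝ) M := rfl

theorem norm_toEuclideanCLM_apply (hM : M ∈ orthogonalGroup (Fin N) ℝ) (x : EV N) :
    ‖toEuclideanCLM (𝕜 := ℝ) M x‖ = ‖x‖ :=
  ContinuousLinearMap.norm_map_of_mem_unitary (Unitary.map_mem toEuclideanCLM hM) x

theorem toEuclideanCLM_mul_transpose (hM : M ∈ orthogonalGroup (Fin N) ℝ) :
    toEuclideanCLM (𝕜 := ℝ) M ∘L toEuclideanCLM (𝕜 := ℝ) Mᵀ = ContinuousLinearMap.id ℝ (EV N) := by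
  rw [← ContinuousLinearMap.one_def, ← ContinuousLinearMap.mul_def, ← map_mul,
    (mem_orthogonalGroup_iff (Fin N) ℝ).1 hM, map_one]

theorem toEuclideanCLM_ebasis (M : Matrix (Fin N) (Fin N) ℝ) (i : Fin N) :
    toEuclideanCLM (𝕜 := ℝ) M (ebasis N i) = ∑ p, M p i • ebasis N p := by
  ext k
  simp [ebasis, mulVec, dotProduct, Pi.single_apply]

theorem rotVec_eq_comp (M : Matrix (Fin N) (Fin N) ℝ) (β : EV N → EV N) :
    rotVec M β = fun x => toEuclideanCLM (𝕜 := ℝ) Mᵀ (β (toEuclideanCLM (𝕜 := ℝ) M x)) := by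
  ext x i
  simp [rotVec, mvec_eq_toEuclideanCLM, mulVec, dotProduct, mul_comm]

theorem divg_eq_trace (β : EV N → EV N) (x : EV N) :
    divg β x = LinearMap.trace ℝ (EV N) (fderiv ℝ β x) := by
  rw [LinearMap.trace_eq_matrix_trace ℝ (EuclideanSpace.basisFun (Fin N) ℝ).toBasis]
  simp [divg, jacEntry, ebasis, Matrix.trace, LinearMap.toMatrix_apply]

theorem Filter.EventuallyEq.pder_eq {f g : EV N → ℝ} {x : EV N} (h : f =ᶠ[𝓝 x] g) (i : Fin N) :
    pder i f x = pder i g x := by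
  simp only [pder, h.fderiv_eq]

theorem ContDiffAt.differentiableAt_pder {f : EV N → ℝ} {z : EV N} (hf : ContDiffAt ℝ 2 f z)
    (i : Fin N) : DifferentiableAt ℝ (pder i f) z :=
  ((hf.fderiv_right (m := 1) (by norm_num)).differentiableAt one_ne_zero).clm_apply
    (differentiableAt_const _)

theorem ContDiffAt.eventually_differentiableAt {E F : Type*} [NormedAddCommGroup E]
    [NormedSpace ℝ E] [NormedAddCommGroup F] [NormedSpace ℝ F] {f : E → F} {z : E}
    (hf : ContDiffAt ℝ 2 f z) : ∀ᶠ y in 𝓝 z, DifferentiableAt ℝ f y :=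
  (hf.eventually (by simp)).mono fun _ hy => hy.differentiableAt (by norm_num)

theorem pder_fun_sum_const_mul {ι : Type*} [Fintype ι] (c : ι → ℝ) {f : ι → EV N → ℝ}
    {x : EV N} (hf : ∀ j, DifferentiableAt ℝ (f j) x) (i : Fin N) :
    pder i (fun y => ∑ j, c j * f j y) x = ∑ j, c j * pder i (f j) x := by
  simp only [pder]
  rw [fderiv_fun_sum fun j _ => (hf j).const_mul (c j), _root_.sum_apply]
  simp only [fderiv_const_mul (hf _), _root_.smul_apply, smul_eq_mul]

theorem pder_comp_toEuclideanCLM (M : Matrix (Fin N) (Fin N) ℝ) {f : EV N → ℝ} {x : EV N}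
    (hf : DifferentiableAt ℝ f (toEuclideanCLM (𝕜 := ℝ) M x)) (i : Fin N) :
    pder i (fun y => f (toEuclideanCLM (𝕜 := ℝ) M y)) x
      = ∑ p, M p i * pder p f (toEuclideanCLM (𝕜 := ℝ) M x) := by
  simp only [pder]
  rw [fderiv_fun_comp x hf (ContinuousLinearMap.differentiableAt _),
    ContinuousLinearMap.fderiv, ContinuousLinearMap.comp_apply, toEuclideanCLM_ebasis, map_sum]
  simp only [map_smul, smul_eq_mul]

theorem lapl_fun_sum_const_mul {ι : Type*} [Fintype ι] (c : ι → ℝ) {f : ι → EV N → ℝ}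
    {z : EV N} (hf : ∀ j, ContDiffAt ℝ 2 (f j) z) :
    lapl (fun y => ∑ j, c j * f j y) z = ∑ j, c j * lapl (f j) z := by
  have hfirst : ∀ i, pder i (fun y => ∑ j, c j * f j y) =ᶠ[𝓝 z]
      fun y => ∑ j, c j * pder i (f j) y := fun i =>
    (eventually_all.2 fun j => (hf j).eventually_differentiableAt).mono
      fun y hy => pder_fun_sum_const_mul c hy i
  calc lapl (fun y => ∑ j, c j * f j y) z
      = ∑ i, ∑ j, c j * pder i (pder i (f j)) z := by
        refine Finset.sum_congr rfl fun i _ => ?_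
        rw [(hfirst i).pder_eq i]
        exact pder_fun_sum_const_mul c (fun j => (hf j).differentiableAt_pder i) i
    _ = ∑ j, c j * lapl (f j) z := by
        simp only [lapl, Finset.mul_sum]
        exact Finset.sum_comm

theorem lapl_comp_toEuclideanCLM (hM : M ∈ orthogonalGroup (Fin N) ℝ) {f : EV N → ℝ}
    {x : EV N} (hf : ContDiffAt ℝ 2 f (toEuclideanCLM (𝕜 := ℝ) M x)) :
    lapl (fun y => f (toEuclideanCLM (𝕜 := ℝ) M y)) x = lapl f (toEuclideanCLM (𝕜 := ℝ) M x) := by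
  set A := toEuclideanCLM (𝕜 := ℝ) M
  have hfirst : ∀ i, pder i (fun y => f (A y)) =ᶠ[𝓝 x]
      fun y => ∑ p, M p i * pder p f (A y) := fun i =>
    (A.continuous.continuousAt.eventually hf.eventually_differentiableAt).mono
      fun y hy => pder_comp_toEuclideanCLM M hy i
  calc lapl (fun y => f (A y)) x
      = ∑ i, ∑ p, M p i * ∑ q, M q i * pder q (pder p f) (A x) := by
        refine Finset.sum_congr rfl fun i _ => ?_
        rw [(hfirst i).pder_eq i,
          pder_fun_sum_const_mul (fun p => M p i) (f := fun p y => pder p f (A y))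
          (fun p => (hf.differentiableAt_pder p).comp x A.differentiableAt) i]
        refine Finset.sum_congr rfl fun p _ => ?_
        rw [pder_comp_toEuclideanCLM M (hf.differentiableAt_pder p) i]
    _ = lapl f (A x) :=
        Matrix.sum_mul_sum_mul_eq_trace ((mem_orthogonalGroup_iff (Fin N) ℝ).1 hM)
          (Matrix.of fun p q => pder q (pder p f) (A x))

theorem ContDiffAt.differentiableAt_divg {β : EV N → EV N} {z : EV N} (hβ : ContDiffAt ℝ 2 β z) :
    DifferentiableAt ℝ (divg β) z := by
  have hD : DifferentiableAt ℝ (fderiv ℝ β) z :=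
    (hβ.fderiv_right (m := 1) (by norm_num)).differentiableAt one_ne_zero
  unfold divg jacEntry
  fun_prop

theorem compF_rotVec (M : Matrix (Fin N) (Fin N) ℝ) (β : EV N → EV N) (l : Fin N) :
    compF (rotVec M β) l = fun y => ∑ j, M j l * compF β j (toEuclideanCLM (𝕜 := ℝ) M y) := by
  ext y
  simp [compF, rotVec, mvec_eq_toEuclideanCLM, mul_comm]

theorem divg_rotVec (hM : M ∈ orthogonalGroup (Fin N) ℝ) {β : EV N → EV N} {x : EV N}
    (hβ : DifferentiableAt ℝ β (toEuclideanCLM (𝕜 := ℝ) M x)) :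
    divg (rotVec M β) x = divg β (toEuclideanCLM (𝕜 := ℝ) M x) := by
  set A := toEuclideanCLM (𝕜 := ℝ) M
  set B := toEuclideanCLM (𝕜 := ℝ) Mᵀ
  have hderiv : fderiv ℝ (rotVec M β) x = B ∘L fderiv ℝ β (A x) ∘L A := by
    rw [rotVec_eq_comp]
    exact (B.hasFDerivAt.comp x (hβ.hasFDerivAt.comp x A.hasFDerivAt)).fderiv
  rw [divg_eq_trace, divg_eq_trace, hderiv, ContinuousLinearMap.toLinearMap_comp,
    LinearMap.trace_comp_comm', ContinuousLinearMap.toLinearMap_comp, LinearMap.comp_assoc,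
    ← ContinuousLinearMap.toLinearMap_comp, toEuclideanCLM_mul_transpose hM]
  rfl

theorem pder_divg_rotVec (hM : M ∈ orthogonalGroup (Fin N) ℝ) {β : EV N → EV N} {x : EV N}
    (hβ : ContDiffAt ℝ 2 β (toEuclideanCLM (𝕜 := ℝ) M x)) (l : Fin N) :
    pder l (divg (rotVec M β)) x = ∑ j, M j l * pder j (divg β) (toEuclideanCLM (𝕜 := ℝ) M x) := by
  have hdivg : divg (rotVec M β) =ᶠ[𝓝 x] fun y => divg β (toEuclideanCLM (𝕜 := ℝ) M y) :=
    ((toEuclideanCLM (𝕜 := ℝ) M).continuous.continuousAt.eventually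
      hβ.eventually_differentiableAt).mono fun y hy => divg_rotVec hM hy
  rw [hdivg.pder_eq l, pder_comp_toEuclideanCLM M hβ.differentiableAt_divg l]

theorem lapl_compF_rotVec (hM : M ∈ orthogonalGroup (Fin N) ℝ) {β : EV N → EV N} {x : EV N}
    (hβ : ContDiffAt ℝ 2 β (toEuclideanCLM (𝕜 := ℝ) M x)) (l : Fin N) :
    lapl (compF (rotVec M β) l) x
      = ∑ j, M j l * lapl (compF β j) (toEuclideanCLM (𝕜 := ℝ) M x) := by
  have hcomp : ∀ j, ContDiffAt ℝ 2 (compF β j) (toEuclideanCLM (𝕜 := ℝ) M x) := fun j =>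
    (EuclideanSpace.proj (𝕜 := ℝ) j).contDiff.contDiffAt.comp _ hβ
  rw [compF_rotVec, lapl_comp_toEuclideanCLM (f := fun z => ∑ j, M j l * compF β j z) hM
    (ContDiffAt.sum fun j _ => contDiffAt_const.mul (hcomp j)), lapl_fun_sum_const_mul _ hcomp]

theorem rotScal_eq_comp (M : Matrix (Fin N) (Fin N) ℝ) (w : EV N → ℝ) :
    rotScal M w = fun x => w (toEuclideanCLM (𝕜 := ℝ) M x) := rfl

theorem eq1_rotVec_rotScal (hM : M ∈ orthogonalGroup (Fin N) ℝ) {t lam mu kk c : ℝ}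
    {β : EV N → EV N} {w : EV N → ℝ} {x : EV N}
    (hβ : ContDiffAt ℝ 2 β (toEuclideanCLM (𝕜 := ℝ) M x))
    (hw : DifferentiableAt ℝ w (toEuclideanCLM (𝕜 := ℝ) M x))
    (heq : ∀ j, -(mu/12) * lapl (compF β j) (toEuclideanCLM (𝕜 := ℝ) M x)
      - ((mu+lam)/12) * pder j (divg β) (toEuclideanCLM (𝕜 := ℝ) M x)
      - (mu*kk/t^2) * (pder j w (toEuclideanCLM (𝕜 := ℝ) M x) - β (toEuclideanCLM (𝕜 := ℝ) M x) j)
        = c * β (toEuclideanCLM (𝕜 := ℝ) M x) j) (l : Fin N) :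
    -(mu/12) * lapl (compF (rotVec M β) l) x - ((mu+lam)/12) * pder l (divg (rotVec M β)) x
      - (mu*kk/t^2) * (pder l (rotScal M w) x - rotVec M β x l) = c * rotVec M β x l := by
  set A := toEuclideanCLM (𝕜 := ℝ) M
  have hrot : rotVec M β x l = ∑ j, M j l * β (A x) j := congrFun (compF_rotVec M β l) x
  rw [lapl_compF_rotVec hM hβ, pder_divg_rotVec hM hβ, rotScal_eq_comp,
    pder_comp_toEuclideanCLM M hw, hrot]
  calc _ = ∑ j, M j l * (-(mu/12) * lapl (compF β j) (A x) - ((mu+lam)/12) * pder j (divg β) (A x)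
          - (mu*kk/t^2) * (pder j w (A x) - β (A x) j)) := by
        simp only [Finset.mul_sum, ← Finset.sum_sub_distrib]
        exact Finset.sum_congr rfl fun j _ => by ring
    _ = c * ∑ j, M j l * β (A x) j := by
        simp only [heq, Finset.mul_sum]
        exact Finset.sum_congr rfl fun j _ => by ring

end

theorem eigenvector_rotation_invariance_general
    (N : ℕ) (t lam mu kk : ℝ)
    (R : ℝ) (γ : ℝ)
    (β : EV N → EV N) (w : EV N → ℝ)
    (h : IsRMEigenOn R t lam mu kk γ β w)
    (M : Matrix (Fin N) (Fin N) ℝ) (hM : M.transpose * M = 1) :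
    IsRMEigenOn R t lam mu kk γ (rotVec M β) (rotScal M w) := by
  have hO : M ∈ orthogonalGroup (Fin N) ℝ := (mem_orthogonalGroup_iff' (Fin N) ℝ).2 hM
  set A := toEuclideanCLM (𝕜 := ℝ) M
  have hnorm : ∀ x, ‖A x‖ = ‖x‖ := norm_toEuclideanCLM_apply hO
  have hball : MapsTo A (Metric.ball 0 R) (Metric.ball 0 R) := fun x hx => by
    simpa [hnorm] using hx
  have hclosedBall : MapsTo A (Metric.closedBall 0 R) (Metric.closedBall 0 R) := fun x hx => by
    simpa [hnorm] using hx
  have hsphere : MapsTo A (Metric.sphere 0 R) (Metric.sphere 0 R) := fun x hx => by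
    simpa [hnorm] using hx
  have hβ : ∀ x ∈ Metric.ball 0 R, ContDiffAt ℝ 2 β (A x) := fun x hx =>
    h.regβ.contDiffAt (Metric.closedBall_mem_nhds_of_mem (hball hx))
  have hw : ∀ x ∈ Metric.ball 0 R, ContDiffAt ℝ 2 w (A x) := fun x hx =>
    h.regw.contDiffAt (Metric.closedBall_mem_nhds_of_mem (hball hx))
  refine ⟨?_, h.regw.comp A.contDiff.contDiffOn hclosedBall, fun x hx => ?_, fun x hx => ?_,
    fun x hx => ?_, fun x hx => h.bdw _ (hsphere hx)⟩
  · rw [rotVec_eq_comp]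
    exact (toEuclideanCLM (𝕜 := ℝ) Mᵀ).contDiff.comp_contDiffOn
      (h.regβ.comp A.contDiff.contDiffOn hclosedBall)
  · exact eq1_rotVec_rotScal hO (hβ x hx) ((hw x hx).differentiableAt (by norm_num))
      (h.eq1 _ (hball hx))
  · rw [rotScal_eq_comp, lapl_comp_toEuclideanCLM hO (hw x hx),
      divg_rotVec hO ((hβ x hx).differentiableAt (by norm_num))]
    exact h.eq2 _ (hball hx)
  · rw [rotVec_eq_comp]
    exact (congrArg (toEuclideanCLM (𝕜 := ℝ) Mᵀ) (h.bdβ _ (hsphere hx))).trans (map_zero _)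

/-- rotation invariance of Reissner–Mindlin eigenvectors on a ball:
if `(β,w)` is an eigenvector with eigenvalue `γ` and `A` is orthogonal with matrix `M`,
then `((β∘A)·M, w∘A)` is again an eigenvector with eigenvalue `γ`. -/
theorem eigenvector_rotation_invariance
    (N : ℕ) (hN : 2 ≤ N) (t lam mu kk : ℝ)
    (ht : 0 < t) (hlam : 0 < lam) (hmu : 0 < mu) (hkk : 0 < kk)
    (R : ℝ) (hR : 0 < R) (γ : ℝ)
    (β : EV N → EV N) (w : EV N → ℝ)
    (h : IsRMEigenOn R t lam mu kk γ β w)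
    (M : Matrix (Fin N) (Fin N) ℝ) (hM : M.transpose * M = 1) :
    IsRMEigenOn R t lam mu kk γ (rotVec M β) (rotScal M w) :=
  eigenvector_rotation_invariance_general N t lam mu kk R γ β w h M hM

end
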